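/- Let c ∈ ℂ. Define the linear operator θ : H → H by θ(𝟏) = (1/2)𝟏, θ(P) = −(1/2)P, θ(φ_{k,p}) = (d_{k,p} − 1/2)·φ_{k,p}, and define the H-valued functions on (0,∞): f₀₁(λ) = λ·𝟏 + (χ·log λ − c)·P, f₀₂(λ) = P, and f_{k,p}(λ) = λ^{d_{k,p}}·φ_{k,p} for 1 ≤ k ≤ 3, 1 ≤ p ≤ a_k−1. Then each of these a₁+a₂+a₃−1 functions f satisfies the linear ODE (λ·Id − ρ)·f′(λ) = (θ + 1/2)·f(λ) for all λ > 0, and every differentiable function g : (0,∞) → H satisfying this ODE is a ℂ-linear combination of them in a unique way. -/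

import Mathlib

open scoped BigOperators

noncomputable section

/-- Indices of the twisted sectors: `⟨k, p⟩` encodes `φ_{k, p.val + 1}`. -/
abbrev TwIdx (a : Fin 3 → ℕ) := (k : Fin 3) × Fin (a k - 1)

/-- Index set of the basis `{𝟏, P} ∪ {φ_{k,p}}` of the Chen–Ruan cohomology `H`:
`Sum.inl 0 = 𝟏`, `Sum.inl 1 = P`, `Sum.inr ⟨k,p⟩ = φ_{k,p+1}`. -/
abbrev Idx (a : Fin 3 → ℕ) := Fin 2 ⊕ TwIdx a

/-- The Chen–Ruan cohomology `H` of `ℙ¹_{a₁,a₂,a₃}`, as coordinates on the basis. -/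
abbrev HSp (a : Fin 3 → ℕ) := Idx a → ℂ

/-- The unit class `𝟏`. -/
def eOne (a : Fin 3 → ℕ) : HSp a := fun i => if i = Sum.inl 0 then 1 else 0

/-- The point class `P`. -/
def eP (a : Fin 3 → ℕ) : HSp a := fun i => if i = Sum.inl 1 then 1 else 0

/-- The twisted class `φ_{k,p}` (with `p : Fin (a k - 1)` encoding `p.val + 1`). -/
def ePhi (a : Fin 3 → ℕ) (k : Fin 3) (p : Fin (a k - 1)) : HSp a :=
  fun i => if i = Sum.inr ⟨k, p⟩ then 1 else 0

/-- `d_{k,p} = 1 - p/a_k`. -/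
def dd (a : Fin 3 → ℕ) (k : Fin 3) (p : Fin (a k - 1)) : ℂ :=
  1 - ((p.val : ℂ) + 1) / (a k : ℂ)

/-- `χ = 1/a₁ + 1/a₂ + 1/a₃ - 1`. -/
def chiQ (a : Fin 3 → ℕ) : ℚ := 1 / (a 0) + 1 / (a 1) + 1 / (a 2) - 1

/-- The Poincaré pairing: `(𝟏,P) = 1`, `(φ_{k,p}, φ_{k,a_k-p}) = 1/a_k`
(note `Fin.rev p` encodes `a_k - p`), all other pairings of basis vectors `0`. -/
def pairH (a : Fin 3 → ℕ) (x y : HSp a) : ℂ :=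
  x (Sum.inl 0) * y (Sum.inl 1) + x (Sum.inl 1) * y (Sum.inl 0) +
    ∑ k : Fin 3, ∑ p : Fin (a k - 1),
      (1 / (a k : ℂ)) * x (Sum.inr ⟨k, p⟩) * y (Sum.inr ⟨k, p.rev⟩)

/-- The operator `ρ`: `ρ(𝟏) = χP`, `ρ(P) = 0`, `ρ(φ_{k,p}) = 0`. -/
def rhoOp (a : Fin 3 → ℕ) (x : HSp a) : HSp a :=
  fun i => if i = Sum.inl 1 then (chiQ a : ℂ) * x (Sum.inl 0) else 0

/-- The Hodge grading operator `θ`: `θ(𝟏) = (1/2)𝟏`, `θ(P) = -(1/2)P`,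
`θ(φ_{k,p}) = (d_{k,p} - 1/2)·φ_{k,p}`. -/
def thetaOp (a : Fin 3 → ℕ) (x : HSp a) : HSp a := fun i =>
  match i with
  | Sum.inl j =>
      if j = 0 then (1 / 2 : ℂ) * x (Sum.inl 0) else -(1 / 2 : ℂ) * x (Sum.inl 1)
  | Sum.inr ⟨k, p⟩ => (dd a k p - 1 / 2) * x (Sum.inr ⟨k, p⟩)

/-- `g : (0,∞) → H` is differentiable and satisfies the ODE
`(λ·Id - ρ)·g'(λ) = (θ + 1/2)·g(λ)` for all `λ > 0`. -/
def SatODE (a : Fin 3 → ℕ) (g : ℝ → HSp a) : Prop :=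
  ∀ lam : ℝ, 0 < lam → ∃ g' : HSp a,
    (∀ i : Idx a, HasDerivAt (fun t : ℝ => g t i) (g' i) lam) ∧
    (lam : ℂ) • g' - rhoOp a g' = thetaOp a (g lam) + (1 / 2 : ℂ) • g lam

/-- The family of `a₁+a₂+a₃-1` solutions: `f₀₁(λ) = λ·𝟏 + (χ log λ - c)·P`,
`f₀₂(λ) = P`, and `f_{k,p}(λ) = λ^{d_{k,p}}·φ_{k,p}`. -/
def solFam (a : Fin 3 → ℕ) (c : ℂ) : Idx a → ℝ → HSp a := fun i =>
  match i with
  | Sum.inl j =>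
      if j = 0 then
        fun lam => (lam : ℂ) • eOne a + ((chiQ a : ℂ) * (Real.log lam : ℂ) - c) • eP a
      else fun _ => eP a
  | Sum.inr ⟨k, p⟩ => fun lam => ((lam : ℂ) ^ dd a k p) • ePhi a k p

lemma constIoi {f : ℝ → ℂ} (hf : ∀ x ∈ Set.Ioi (0:ℝ), HasDerivAt f 0 x)
    {x : ℝ} (hx : 0 < x) : f x = f 1 := by
  apply (convex_Ioi (0:ℝ)).is_const_of_fderivWithin_eq_zero
    (fun y hy => ((hf y hy).differentiableAt).differentiableWithinAt) ?_ hx (by norm_num)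
  intro y hy
  rw [fderivWithin_of_isOpen isOpen_Ioi hy, (hf y hy).hasFDerivAt.fderiv]
  ext; simp

lemma hasDerivAt_coe (lam : ℝ) : HasDerivAt (fun t : ℝ => (t:ℂ)) 1 lam :=
  (hasDerivAt_id (lam:ℂ)).comp_ofReal

lemma hasDerivAt_rcpow {lam : ℝ} (h : 0 < lam) (d : ℂ) :
    HasDerivAt (fun t : ℝ => (t:ℂ) ^ d) (d * (lam:ℂ) ^ (d-1)) lam := by
  have h1 : HasDerivAt (fun z : ℂ => z ^ d) (d * (lam:ℂ) ^ (d-1) * 1) (lam:ℂ) :=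
    (hasDerivAt_id (lam:ℂ)).cpow_const (Complex.ofReal_mem_slitPlane.mpr h)
  simpa using h1.comp_ofReal

lemma hasDerivAt_clog {lam : ℝ} (h : 0 < lam) :
    HasDerivAt (fun t : ℝ => ((Real.log t : ℝ):ℂ)) ((lam:ℂ))⁻¹ lam := by
  simpa using (Real.hasDerivAt_log h.ne').ofReal_comp

lemma sat01 (a : Fin 3 → ℕ) (c : ℂ) : SatODE a (solFam a c (Sum.inl 0)) := by
  intro lam hlam
  have hne : (lam:ℂ) ≠ 0 := by exact_mod_cast hlam.ne'
  refine ⟨eOne a + ((chiQ a : ℂ) * ((lam:ℂ))⁻¹) • eP a, ?_, ?_⟩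
  · intro i
    simp only [solFam, if_pos rfl, Pi.add_apply, Pi.smul_apply, smul_eq_mul]
    have h1 := (hasDerivAt_coe lam).mul_const (eOne a i)
    have h2 := ((((hasDerivAt_clog hlam).const_mul ((chiQ a : ℂ))).sub_const c).mul_const (eP a i))
    have h := h1.add h2
    simp only [one_mul] at h
    exact h
  · funext i
    match i with
    | Sum.inl 0 =>
      simp [solFam, rhoOp, thetaOp, eOne, eP]
      ring
    | Sum.inl 1 =>
      simp [solFam, rhoOp, thetaOp, eOne, eP]
      field_simp
      ring
    | Sum.inr ⟨k, p⟩ =>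
      simp [solFam, rhoOp, thetaOp, eOne, eP]

lemma sat02 (a : Fin 3 → ℕ) (c : ℂ) : SatODE a (solFam a c (Sum.inl 1)) := by
  intro lam hlam
  refine ⟨0, ?_, ?_⟩
  · intro i
    simpa [solFam] using (hasDerivAt_const lam (eP a i))
  · funext i
    match i with
    | Sum.inl 0 => simp [solFam, rhoOp, thetaOp, eP]
    | Sum.inl 1 => simp [solFam, rhoOp, thetaOp, eP]
    | Sum.inr ⟨k, p⟩ => simp [solFam, rhoOp, thetaOp, eP]

lemma satkp (a : Fin 3 → ℕ) (c : ℂ) (k : Fin 3) (p : Fin (a k - 1)) :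
    SatODE a (solFam a c (Sum.inr ⟨k, p⟩)) := by
  intro lam hlam
  have hne : (lam:ℂ) ≠ 0 := by exact_mod_cast hlam.ne'
  refine ⟨(dd a k p * (lam:ℂ) ^ (dd a k p - 1)) • ePhi a k p, ?_, ?_⟩
  · intro i
    simp only [solFam, Pi.smul_apply, smul_eq_mul]
    exact (hasDerivAt_rcpow hlam (dd a k p)).mul_const (ePhi a k p i)
  · funext i
    have key : (lam:ℂ) * (dd a k p * (lam:ℂ) ^ (dd a k p - 1)) = dd a k p * (lam:ℂ) ^ dd a k p := by
      rw [Complex.cpow_sub _ _ hne, Complex.cpow_one]; field_simp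
    match i with
    | Sum.inl 0 => simp [solFam, rhoOp, thetaOp, ePhi]
    | Sum.inl 1 => simp [solFam, rhoOp, thetaOp, ePhi]
    | Sum.inr ⟨k', p'⟩ =>
      simp only [solFam, rhoOp, thetaOp, ePhi, Pi.smul_apply, Pi.sub_apply, Pi.add_apply,
        smul_eq_mul, reduceCtorEq, if_false, Sum.inr.injEq, mul_ite, mul_one, mul_zero]
      by_cases h : (⟨k', p'⟩ : TwIdx a) = ⟨k, p⟩
      · have hd : dd a k' p' = dd a k p := by
          rw [Sigma.mk.inj_iff] at h; obtain ⟨h1, h2⟩ := h; subst h1; rw [eq_of_heq h2]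
        simp only [if_pos h, hd, key]; ring
      · simp only [if_neg h, sub_zero, mul_zero, add_zero, zero_add]

lemma sum_eval (a : Fin 3 → ℕ) (c : ℂ) (coef : Idx a → ℂ) (lam : ℝ) (j : Idx a) :
    (∑ i : Idx a, coef i • solFam a c i lam) j =
      coef (Sum.inl 0) * ((lam:ℂ) * eOne a j + ((chiQ a : ℂ) * (Real.log lam : ℂ) - c) * eP a j)
      + coef (Sum.inl 1) * eP a j
      + ∑ σ : TwIdx a, coef (Sum.inr σ) * ((lam:ℂ) ^ dd a σ.1 σ.2) * ePhi a σ.1 σ.2 j := by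
  rw [Finset.sum_apply, Fintype.sum_sum_type, Fin.sum_univ_two]
  simp only [Pi.smul_apply, smul_eq_mul, solFam, if_pos rfl, Pi.add_apply]
  norm_num
  congr 1
  funext σ
  ring

lemma sum_eval_inl0 (a : Fin 3 → ℕ) (c : ℂ) (coef : Idx a → ℂ) (lam : ℝ) :
    (∑ i : Idx a, coef i • solFam a c i lam) (Sum.inl 0) = coef (Sum.inl 0) * lam := by
  rw [sum_eval]
  simp [eOne, eP, ePhi]

lemma sum_eval_inl1 (a : Fin 3 → ℕ) (c : ℂ) (coef : Idx a → ℂ) (lam : ℝ) :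
    (∑ i : Idx a, coef i • solFam a c i lam) (Sum.inl 1) =
      coef (Sum.inl 0) * ((chiQ a : ℂ) * (Real.log lam : ℂ) - c) + coef (Sum.inl 1) := by
  rw [sum_eval]
  simp [eOne, eP, ePhi]

lemma sum_eval_inr (a : Fin 3 → ℕ) (c : ℂ) (coef : Idx a → ℂ) (lam : ℝ) (τ : TwIdx a) :
    (∑ i : Idx a, coef i • solFam a c i lam) (Sum.inr τ) =
      coef (Sum.inr τ) * (lam:ℂ) ^ dd a τ.1 τ.2 := by
  rw [sum_eval]
  simp only [eOne, eP, ePhi, reduceCtorEq, if_false, mul_zero, zero_add, mul_one]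
  rw [Finset.sum_eq_single τ]
  · simp
  · intro σ _ hστ
    simp only [Sum.inr.injEq]
    rw [if_neg (fun h => hστ h.symm)]
    simp
  · simp

/-- Each of the `a₁+a₂+a₃-1` functions `f₀₁, f₀₂, f_{k,p}` solves
`(λ·Id - ρ)·f'(λ) = (θ + 1/2)·f(λ)` on `(0,∞)`, and every differentiable solution is a
`ℂ`-linear combination of them in a unique way. -/
theorem stmt12 (a : Fin 3 → ℕ) (ha : ∀ k, 0 < a k) (c : ℂ) :
    (∀ i : Idx a, SatODE a (solFam a c i)) ∧
    (∀ g : ℝ → HSp a, SatODE a g →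
      ∃! coef : Idx a → ℂ,
        ∀ lam : ℝ, 0 < lam → g lam = ∑ i : Idx a, coef i • solFam a c i lam) := by
  constructor
  · intro i
    match i with
    | Sum.inl 0 => exact sat01 a c
    | Sum.inl 1 => exact sat02 a c
    | Sum.inr ⟨k, p⟩ => exact satkp a c k p
  · intro g hg
    choose D hD hEq using hg
    -- component equations
    have e0 : ∀ (lam : ℝ) (h : 0 < lam), (lam:ℂ) * D lam h (Sum.inl 0) = g lam (Sum.inl 0) := by
      intro lam h
      have := congrFun (hEq lam h) (Sum.inl 0)
      simp only [Pi.sub_apply, Pi.add_apply, Pi.smul_apply, smul_eq_mul, rhoOp, thetaOp] at this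
      norm_num at this
      linear_combination this
    have e1 : ∀ (lam : ℝ) (h : 0 < lam),
        (lam:ℂ) * D lam h (Sum.inl 1) = (chiQ a : ℂ) * D lam h (Sum.inl 0) := by
      intro lam h
      have := congrFun (hEq lam h) (Sum.inl 1)
      simp only [Pi.sub_apply, Pi.add_apply, Pi.smul_apply, smul_eq_mul, rhoOp, thetaOp] at this
      norm_num at this
      linear_combination this
    have eσ : ∀ (σ : TwIdx a) (lam : ℝ) (h : 0 < lam),
        (lam:ℂ) * D lam h (Sum.inr σ) = dd a σ.1 σ.2 * g lam (Sum.inr σ) := by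
      intro σ lam h
      have := congrFun (hEq lam h) (Sum.inr σ)
      obtain ⟨k, p⟩ := σ
      simp only [Pi.sub_apply, Pi.add_apply, Pi.smul_apply, smul_eq_mul, rhoOp, thetaOp,
        reduceCtorEq, if_false] at this
      linear_combination this
    set A := g 1 (Sum.inl 0) with hA
    set B := g 1 (Sum.inl 1) with hB
    -- step 0
    have step0 : ∀ lam, 0 < lam → g lam (Sum.inl 0) = A * lam := by
      intro lam h
      have hc : ∀ x ∈ Set.Ioi (0:ℝ), HasDerivAt (fun t : ℝ => g t (Sum.inl 0) * ((t:ℂ))⁻¹) 0 x := by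
        intro x hx
        have hx' : (0:ℝ) < x := hx
        have hxne : (x:ℂ) ≠ 0 := by exact_mod_cast hx'.ne'
        have h2 : HasDerivAt (fun t : ℝ => ((t:ℂ))⁻¹) (-((x:ℂ)^2)⁻¹) x :=
          (hasDerivAt_inv hxne).comp_ofReal
        have h3 := (hD x hx' (Sum.inl 0)).mul h2
        convert h3 using 1
        case e'_4 => rfl
        case e'_8 => rfl
        rw [eq_comm, ← e0 x hx']
        field_simp
        ring
      have h4 := constIoi hc h
      have hlne : (lam:ℂ) ≠ 0 := by exact_mod_cast h.ne'
      have h5 : g lam (Sum.inl 0) * ((lam:ℂ))⁻¹ = g 1 (Sum.inl 0) := by simpa using h4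
      rw [hA, ← h5, inv_mul_cancel_right₀ hlne]
    have hD0 : ∀ (lam : ℝ) (h : 0 < lam), D lam h (Sum.inl 0) = A := by
      intro lam h
      have hlne : (lam:ℂ) ≠ 0 := by exact_mod_cast h.ne'
      have h5 : (lam:ℂ) * D lam h (Sum.inl 0) = (lam:ℂ) * A := by
        rw [e0 lam h, step0 lam h]; ring
      exact mul_left_cancel₀ hlne h5
    -- step 1
    have step1 : ∀ (lam : ℝ), 0 < lam →
        g lam (Sum.inl 1) = (chiQ a : ℂ) * A * ((Real.log lam : ℝ):ℂ) + B := by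
      intro lam h
      have hc : ∀ x ∈ Set.Ioi (0:ℝ), HasDerivAt
          (fun t : ℝ => g t (Sum.inl 1) - (chiQ a : ℂ) * A * ((Real.log t : ℝ):ℂ)) 0 x := by
        intro x hx
        have hx' : (0:ℝ) < x := hx
        have hxne : (x:ℂ) ≠ 0 := by exact_mod_cast hx'.ne'
        have h2 := (hasDerivAt_clog hx').const_mul ((chiQ a : ℂ) * A)
        have h3 := (hD x hx' (Sum.inl 1)).sub h2
        convert h3 using 1
        case e'_4 => rfl
        case e'_8 => rfl
        have h4 := e1 x hx'
        rw [hD0 x hx'] at h4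
        have h5 : D x hx' (Sum.inl 1) = (chiQ a : ℂ) * A * ((x:ℂ))⁻¹ := by
          rw [← div_eq_mul_inv, eq_div_iff hxne]; linear_combination h4
        rw [h5]; ring
      have h4 := constIoi hc h
      simp only [Real.log_one, Complex.ofReal_zero, mul_zero, sub_zero] at h4
      rw [← hB] at h4
      linear_combination h4
    -- step sigma
    have stepσ : ∀ (σ : TwIdx a) (lam : ℝ), 0 < lam →
        g lam (Sum.inr σ) = g 1 (Sum.inr σ) * (lam:ℂ) ^ dd a σ.1 σ.2 := by
      intro σ lam h
      have hlne : (lam:ℂ) ≠ 0 := by exact_mod_cast h.ne'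
      set d := dd a σ.1 σ.2 with hd
      have hc : ∀ x ∈ Set.Ioi (0:ℝ), HasDerivAt
          (fun t : ℝ => g t (Sum.inr σ) * (t:ℂ) ^ (-d)) 0 x := by
        intro x hx
        have hx' : (0:ℝ) < x := hx
        have hxne : (x:ℂ) ≠ 0 := by exact_mod_cast hx'.ne'
        have h2 := hasDerivAt_rcpow hx' (-d)
        have h3 := (hD x hx' (Sum.inr σ)).mul h2
        convert h3 using 1
        case e'_4 => rfl
        case e'_8 => rfl
        have h4 := eσ σ x hx'
        have hu : (x:ℂ) ^ (-d) ≠ 0 := by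
          simp only [ne_eq, Complex.cpow_eq_zero_iff, not_and_or, not_not]
          exact Or.inl hxne
        have h5 : D x hx' (Sum.inr σ) = d * g x (Sum.inr σ) * ((x:ℂ))⁻¹ := by
          rw [← div_eq_mul_inv, eq_div_iff hxne]; linear_combination h4
        have hsplit : (x:ℂ) ^ (-d - 1) = (x:ℂ) ^ (-d) * ((x:ℂ))⁻¹ := by
          rw [Complex.cpow_sub _ _ hxne, Complex.cpow_one, div_eq_mul_inv]
        rw [h5, hsplit]; ring
      have h4 := constIoi hc h
      simp only [Complex.ofReal_one, Complex.one_cpow, mul_one] at h4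
      have hu : (lam:ℂ) ^ d ≠ 0 := by
        simp only [ne_eq, Complex.cpow_eq_zero_iff, not_and_or, not_not]
        exact Or.inl hlne
      rw [← h4, Complex.cpow_neg, inv_mul_cancel_right₀ hu]
    -- assemble
    refine ⟨Sum.elim (fun j : Fin 2 => if j = 0 then A else B + c * A)
      (fun σ : TwIdx a => g 1 (Sum.inr σ)), ?_, ?_⟩
    · intro lam hlam
      funext j
      match j with
      | Sum.inl 0 =>
        rw [sum_eval_inl0, step0 lam hlam]
        norm_num [mul_comm]
      | Sum.inl 1 =>
        rw [sum_eval_inl1, step1 lam hlam]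
        norm_num
        ring
      | Sum.inr σ =>
        rw [sum_eval_inr, stepσ σ lam hlam]
        simp
    · intro y hy
      have h1 := hy 1 one_pos
      have t0 := congrFun h1 (Sum.inl 0)
      rw [sum_eval_inl0] at t0
      simp only [Complex.ofReal_one, mul_one] at t0
      funext i
      match i with
      | Sum.inl 0 =>
        simp only [Sum.elim_inl, if_pos rfl, hA]
        exact t0.symm
      | Sum.inl 1 =>
        have t1 := congrFun h1 (Sum.inl 1)
        rw [sum_eval_inl1] at t1
        simp only [Real.log_one, Complex.ofReal_zero, mul_zero, zero_sub] at t1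
        norm_num
        linear_combination -t1 - c * t0
      | Sum.inr σ =>
        have t2 := congrFun h1 (Sum.inr σ)
        rw [sum_eval_inr, Complex.ofReal_one, Complex.one_cpow, mul_one] at t2
        simp only [Sum.elim_inr]
        exact t2.symm
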